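/- arXiv:math-ph/0511078 — 5 statements merged into one kernel-verified Lean document; each statement's English description precedes it below -/
import Mathlib

section
/- Let M ⊆ ℤ be a nonempty integer interval and let (λ_k)_{k∈M}, (μ_k)_{k∈M} be interlaced real sequences with no finite accumulation point such that Σ_{k∈M}(μ_k − λ_k) = Δ < ∞. Then for every n ∈ M the infinite product ∏_{k∈M, k≠n} (μ_k − λ_n)/(λ_k − λ_n) converges (is multipliable) and its value is a strictly positive real number; consequently the number τ_n defined by τ_n^{-1} := ((μ_n − λ_n)/Δ) · ∏_{k∈M, k≠n} (μ_k − λ_n)/(λ_k − λ_n) satisfies τ_n > 0. -/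
/-!
Each factor is `(μ_k - λ_n)/(λ_k - λ_n) = 1 + (μ_k - λ_k)/(λ_k - λ_n)`. Interlacing gives
`μ_k < λ_j` for all `k < j` in `M`, so every factor is positive and the points `λ_k`, `k ≠ n`,
stay at distance at least `δ > 0` from `λ_n` (`δ` is the gap to `μ_n` on the right and to
`μ_{n-1}` on the left). Hence the perturbations are dominated by `(μ_k - λ_k)/δ`, which is
summable, and a product `∏ (1 + g_k)` of positive factors with `g` summable converges to
`exp (∑ log (1 + g_k)) > 0`.
-/

theorem Real.tprod_one_add_pos_of_summable {ι : Type*} {g : ι → ℝ} (hpos : ∀ i, 0 < 1 + g i)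
    (hg : Summable g) : 0 < ∏' i, (1 + g i) := by
  rw [← Real.rexp_tsum_eq_tprod hpos (Real.summable_log_one_add_of_summable hg)]
  exact Real.exp_pos _

structure Interlaced (M : Set ℤ) (lam mu : ℤ → ℝ) : Prop where
  lt : ∀ k ∈ M, lam k < mu k
  step : ∀ k ∈ M, k + 1 ∈ M → mu k < lam (k + 1)

namespace Interlaced

variable {M : Set ℤ} [M.OrdConnected] {lam mu : ℤ → ℝ}

theorem mu_lt_lam_of_lt (h : Interlaced M lam mu) {k j : ℤ} (hk : k ∈ M) (hj : j ∈ M)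
    (hkj : k < j) : mu k < lam j := by
  induction j, (hkj : k + 1 ≤ j) using Int.leInduction with
  | base => exact h.step k hk hj
  | succ j hkj ih =>
    have hjM : j ∈ M := Set.OrdConnected.out ‹_› hk hj ⟨by omega, by omega⟩
    linarith [ih hjM, h.lt j hjM, h.step j hjM hj]

theorem mu_le_mu_of_le (h : Interlaced M lam mu) {k j : ℤ} (hk : k ∈ M) (hj : j ∈ M)
    (hkj : k ≤ j) : mu k ≤ mu j := by
  rcases hkj.eq_or_lt with rfl | hkj
  · rfl
  · linarith [h.mu_lt_lam_of_lt hk hj hkj, h.lt j hj]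

theorem exists_pos_le_abs_lam_sub (h : Interlaced M lam mu) {n : ℤ} (hn : n ∈ M) :
    ∃ δ > 0, ∀ k ∈ M, k ≠ n → δ ≤ |lam k - lam n| := by
  have right : ∀ k ∈ M, n < k → mu n - lam n ≤ |lam k - lam n| := fun k hk hnk => by
    have := h.mu_lt_lam_of_lt hn hk hnk
    rw [abs_of_pos (by linarith [h.lt n hn])]
    linarith
  by_cases hprev : n - 1 ∈ M
  · have hgap : mu (n - 1) < lam n := by simpa using h.step (n - 1) hprev (by simpa using hn)
    refine ⟨min (mu n - lam n) (lam n - mu (n - 1)),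
      lt_min (by linarith [h.lt n hn]) (by linarith), fun k hk hkn => ?_⟩
    rcases hkn.lt_or_gt with hkn | hnk
    · have := h.mu_le_mu_of_le hk hprev (by omega)
      rw [abs_of_neg (by linarith [h.lt k hk])]
      linarith [min_le_right (mu n - lam n) (lam n - mu (n - 1)), h.lt k hk]
    · exact (min_le_left _ _).trans (right k hk hnk)
  · refine ⟨mu n - lam n, by linarith [h.lt n hn], fun k hk hkn => right k hk ?_⟩
    by_contra! hkn'
    exact hprev (Set.OrdConnected.out ‹_› hk hn ⟨by omega, by omega⟩)

theorem strictMonoOn_lam (h : Interlaced M lam mu) : StrictMonoOn lam M :=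
  fun k hk _ hj hkj => (h.lt k hk).trans (h.mu_lt_lam_of_lt hk hj hkj)

theorem div_lam_sub_pos (h : Interlaced M lam mu) {n k : ℤ} (hn : n ∈ M) (hk : k ∈ M)
    (hkn : k ≠ n) : 0 < (mu k - lam n) / (lam k - lam n) := by
  rcases hkn.lt_or_gt with hkn | hnk
  · have := h.mu_lt_lam_of_lt hk hn hkn
    exact div_pos_of_neg_of_neg (by linarith) (by linarith [h.lt k hk])
  · have := h.mu_lt_lam_of_lt hn hk hnk
    exact div_pos (by linarith [h.lt n hn, h.lt k hk]) (by linarith [h.lt n hn])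

theorem summable_div_lam_sub (h : Interlaced M lam mu) (hsum : Summable fun k : M => mu k - lam k)
    {n : ℤ} (hn : n ∈ M) :
    Summable fun k : {k : M // (k : ℤ) ≠ n} =>
      (mu ((k : M) : ℤ) - lam k) / (lam ((k : M) : ℤ) - lam n) := by
  obtain ⟨δ, hδ, hsep⟩ := h.exists_pos_le_abs_lam_sub hn
  refine ((hsum.subtype _).div_const δ).of_norm_bounded fun k => ?_
  have hkM := (k : M).2
  rw [Real.norm_eq_abs, abs_div, abs_of_pos (by linarith [h.lt _ hkM])]
  exact div_le_div_of_nonneg_left (by linarith [h.lt _ hkM]) hδ (hsep _ hkM k.2)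

theorem multipliable_and_tprod_pos (h : Interlaced M lam mu)
    (hsum : Summable fun k : M => mu k - lam k) {n : ℤ} (hn : n ∈ M) :
    Multipliable (fun k : {k : M // (k : ℤ) ≠ n} =>
        (mu ((k : M) : ℤ) - lam n) / (lam ((k : M) : ℤ) - lam n)) ∧
      0 < ∏' k : {k : M // (k : ℤ) ≠ n},
        (mu ((k : M) : ℤ) - lam n) / (lam ((k : M) : ℤ) - lam n) := by
  have hfactor (k : {k : M // (k : ℤ) ≠ n}) :
      (mu ((k : M) : ℤ) - lam n) / (lam ((k : M) : ℤ) - lam n) =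
        1 + (mu ((k : M) : ℤ) - lam k) / (lam ((k : M) : ℤ) - lam n) := by
    have hne := sub_ne_zero.mpr (h.strictMonoOn_lam.injOn.ne (k : M).2 hn k.2)
    rw [one_add_div hne]
    ring
  have hg := h.summable_div_lam_sub hsum hn
  simp only [hfactor]
  refine ⟨Real.multipliable_one_add_of_summable hg, Real.tprod_one_add_pos_of_summable
    (fun k => ?_) hg⟩
  exact hfactor k ▸ h.div_lam_sub_pos hn (k : M).2 k.2

end Interlaced

theorem two_spectra_tau_pos_general
    (M : Set ℤ)
    (hMint : ∀ a b c : ℤ, a ∈ M → c ∈ M → a ≤ b → b ≤ c → b ∈ M)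
    (lam mu : ℤ → ℝ)
    (hinter₁ : ∀ k ∈ M, lam k < mu k)
    (hinter₂ : ∀ k : ℤ, k ∈ M → k + 1 ∈ M → mu k < lam (k + 1))
    (Δ : ℝ)
    (hsum : HasSum (fun k : M => mu (k : ℤ) - lam (k : ℤ)) Δ) :
    ∀ n ∈ M,
      Multipliable
        (fun k : {k : M // (k : ℤ) ≠ n} =>
          (mu ((k : M) : ℤ) - lam n) / (lam ((k : M) : ℤ) - lam n)) ∧
      0 < ∏' k : {k : M // (k : ℤ) ≠ n},
            (mu ((k : M) : ℤ) - lam n) / (lam ((k : M) : ℤ) - lam n) ∧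
      0 < ((mu n - lam n) / Δ *
            ∏' k : {k : M // (k : ℤ) ≠ n},
              (mu ((k : M) : ℤ) - lam n) / (lam ((k : M) : ℤ) - lam n))⁻¹ := by
  intro n hn
  have : M.OrdConnected := ⟨fun a ha c hc b hb => hMint a b c ha hc hb.1 hb.2⟩
  obtain ⟨hmult, hprod⟩ :=
    (Interlaced.mk hinter₁ hinter₂).multipliable_and_tprod_pos hsum.summable hn
  have hgap : 0 < mu n - lam n := sub_pos.mpr (hinter₁ n hn)
  have hΔ : mu n - lam n ≤ Δ :=
    le_hasSum hsum ⟨n, hn⟩ fun k _ => (sub_pos.mpr (hinter₁ k k.2)).le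
  exact ⟨hmult, hprod, inv_pos.mpr (mul_pos (div_pos hgap (hgap.trans_le hΔ)) hprod)⟩

/-- For interlaced sequences on an integer interval with summable gaps,
the product ∏_{k∈M, k≠n} (μ_k − λ_n)/(λ_k − λ_n) is multipliable with strictly
positive value, and τ_n defined by
τ_n⁻¹ = ((μ_n − λ_n)/Δ) ∏_{k≠n} (μ_k − λ_n)/(λ_k − λ_n) is strictly positive. -/
theorem two_spectra_tau_pos
    (M : Set ℤ) (hM : M.Nonempty)
    (hMint : ∀ a b c : ℤ, a ∈ M → c ∈ M → a ≤ b → b ≤ c → b ∈ M)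
    (lam mu : ℤ → ℝ)
    (hinter₁ : ∀ k ∈ M, lam k < mu k)
    (hinter₂ : ∀ k : ℤ, k ∈ M → k + 1 ∈ M → mu k < lam (k + 1))
    (hacc : ∀ R : ℝ, 0 < R → {k ∈ M | |lam k| ≤ R}.Finite)
    (Δ : ℝ)
    (hsum : HasSum (fun k : M => mu (k : ℤ) - lam (k : ℤ)) Δ) :
    ∀ n ∈ M,
      Multipliable
        (fun k : {k : M // (k : ℤ) ≠ n} =>
          (mu ((k : M) : ℤ) - lam n) / (lam ((k : M) : ℤ) - lam n)) ∧
      0 < ∏' k : {k : M // (k : ℤ) ≠ n},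
            (mu ((k : M) : ℤ) - lam n) / (lam ((k : M) : ℤ) - lam n) ∧
      0 < ((mu n - lam n) / Δ *
            ∏' k : {k : M // (k : ℤ) ≠ n},
              (mu ((k : M) : ℤ) - lam n) / (lam ((k : M) : ℤ) - lam n))⁻¹ :=
  two_spectra_tau_pos_general M hMint lam mu hinter₁ hinter₂ Δ hsum
end

section
/- Let M ⊆ ℤ be a nonempty integer interval and let (λ_k)_{k∈M}, (μ_k)_{k∈M} be interlaced real sequences with no finite accumulation point such that Σ_{k∈M}(μ_k − λ_k) = Δ < ∞. Then for every nonreal ζ the infinite product F(ζ) := ∏_{k∈M} (μ_k − ζ)/(λ_k − ζ) converges (is multipliable), and for every ε > 0 one has F(ζ) → 1 as |ζ| → ∞ with ζ restricted to the region {ζ ∈ ℂ : Im ζ ≥ ε}. -/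
/-!
Each factor is `1 + (μ_k - λ_k) / (λ_k - ζ)`, and `|λ_k - ζ| ≥ Im ζ` because `λ_k` is real.
On `{Im ζ ≥ ε}` the perturbations are therefore dominated by the summable sequence
`|μ_k - λ_k| / ε`, while each of them tends to `0` as `|ζ| → ∞`; dominated convergence for
infinite products then gives `F(ζ) → ∏ (1 + 0) = 1`.
-/

open Filter Topology Bornology

namespace Complex

variable {ζ : ℂ}

lemma ofReal_sub_ne_zero (hζ : ζ.im ≠ 0) (a : ℝ) : (a : ℂ) - ζ ≠ 0 := fun h =>
  hζ (by simpa using congrArg im h)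

lemma abs_im_le_norm_ofReal_sub (a : ℝ) (ζ : ℂ) : |ζ.im| ≤ ‖(a : ℂ) - ζ‖ := by
  simpa using abs_im_le_norm ((a : ℂ) - ζ)

lemma ofReal_sub_div_ofReal_sub (hζ : ζ.im ≠ 0) (a b : ℝ) :
    ((b : ℂ) - ζ) / ((a : ℂ) - ζ) = 1 + ((b - a : ℝ) : ℂ) / ((a : ℂ) - ζ) := by
  field_simp [ofReal_sub_ne_zero hζ a]
  push_cast
  ring

lemma norm_ofReal_div_ofReal_sub_le (hζ : ζ.im ≠ 0) (d a : ℝ) :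
    ‖(d : ℂ) / ((a : ℂ) - ζ)‖ ≤ |d| / |ζ.im| := by
  rw [norm_div, norm_real, Real.norm_eq_abs]
  exact div_le_div_of_nonneg_left (abs_nonneg d) (abs_pos.2 hζ) (abs_im_le_norm_ofReal_sub a ζ)

lemma tendsto_ofReal_div_ofReal_sub_cobounded (d a : ℝ) :
    Tendsto (fun ζ : ℂ => (d : ℂ) / ((a : ℂ) - ζ)) (cobounded ℂ) (𝓝 0) := by
  simpa [div_eq_mul_inv] using
    (tendsto_inv₀_cobounded.comp (tendsto_const_sub_cobounded (a : ℂ))).const_mul (d : ℂ)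

end Complex

section TwoSpectra

variable {ι : Type*} {a b : ι → ℝ}

lemma multipliable_ofReal_sub_div_ofReal_sub (h : Summable fun k => b k - a k) {ζ : ℂ}
    (hζ : ζ.im ≠ 0) : Multipliable fun k => ((b k : ℂ) - ζ) / ((a k : ℂ) - ζ) := by
  simp_rw [Complex.ofReal_sub_div_ofReal_sub hζ]
  exact multipliable_one_add_of_summable <| (h.abs.div_const |ζ.im|).of_nonneg_of_le
    (fun _ => norm_nonneg _) fun k => Complex.norm_ofReal_div_ofReal_sub_le hζ _ _

lemma tendsto_tprod_ofReal_sub_div_ofReal_sub (h : Summable fun k => b k - a k) {ε : ℝ}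
    (hε : 0 < ε) :
    Tendsto (fun ζ : ℂ => ∏' k, ((b k : ℂ) - ζ) / ((a k : ℂ) - ζ))
      (comap (fun ζ : ℂ => ‖ζ‖) atTop ⊓ 𝓟 {ζ : ℂ | ε ≤ ζ.im}) (𝓝 1) := by
  set l := comap (fun ζ : ℂ => ‖ζ‖) atTop ⊓ 𝓟 {ζ : ℂ | ε ≤ ζ.im}
  have him : ∀ᶠ ζ in l, ε ≤ ζ.im := mem_inf_of_right (mem_principal_self _)
  have hlim : ∀ k, Tendsto (fun ζ => ((b k - a k : ℝ) : ℂ) / ((a k : ℂ) - ζ)) l (𝓝 0) :=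
    fun k => (Complex.tendsto_ofReal_div_ofReal_sub_cobounded _ _).mono_left
      (comap_norm_atTop (E := ℂ) ▸ inf_le_left)
  have hbound : ∀ᶠ ζ in l, ∀ k, ‖((b k - a k : ℝ) : ℂ) / ((a k : ℂ) - ζ)‖ ≤ |b k - a k| / ε := by
    filter_upwards [him] with ζ hζ k
    calc _ ≤ |b k - a k| / |ζ.im| :=
          Complex.norm_ofReal_div_ofReal_sub_le (hε.trans_le hζ).ne' _ _
      _ ≤ |b k - a k| / ε :=
          div_le_div_of_nonneg_left (abs_nonneg _) hε (hζ.trans (le_abs_self _))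
  have hprod := tendsto_tprod_one_add_of_dominated_convergence (h.abs.div_const ε) hlim hbound
  rw [show ∏' _ : ι, (1 + (0 : ℂ)) = 1 by simp] at hprod
  refine hprod.congr' ?_
  filter_upwards [him] with ζ hζ
  exact tprod_congr fun k => (Complex.ofReal_sub_div_ofReal_sub (hε.trans_le hζ).ne' _ _).symm

end TwoSpectra

theorem two_spectra_prod_tendsto_one_general
    (M : Set ℤ)
    (lam mu : ℤ → ℝ)
    (Δ : ℝ)
    (hsum : HasSum (fun k : M => mu (k : ℤ) - lam (k : ℤ)) Δ) :
    (∀ ζ : ℂ, ζ.im ≠ 0 →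
        Multipliable (fun k : M => ((mu (k : ℤ) : ℂ) - ζ) / ((lam (k : ℤ) : ℂ) - ζ))) ∧
    ∀ ε : ℝ, 0 < ε →
      Tendsto (fun ζ : ℂ => ∏' k : M, ((mu (k : ℤ) : ℂ) - ζ) / ((lam (k : ℤ) : ℂ) - ζ))
        (Filter.comap (fun ζ : ℂ => ‖ζ‖) Filter.atTop ⊓
          Filter.principal {ζ : ℂ | ε ≤ ζ.im})
        (𝓝 1) :=
  ⟨fun _ hζ => multipliable_ofReal_sub_div_ofReal_sub hsum.summable hζ,
    fun _ hε => tendsto_tprod_ofReal_sub_div_ofReal_sub hsum.summable hε⟩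

/-- For interlaced sequences on an integer interval with summable gaps,
the product F(ζ) = ∏_{k∈M} (μ_k − ζ)/(λ_k − ζ) is multipliable for every nonreal ζ,
and F(ζ) → 1 as |ζ| → ∞ in each region {Im ζ ≥ ε}, ε > 0. -/
theorem two_spectra_prod_tendsto_one
    (M : Set ℤ) (hM : M.Nonempty)
    (hMint : ∀ a b c : ℤ, a ∈ M → c ∈ M → a ≤ b → b ≤ c → b ∈ M)
    (lam mu : ℤ → ℝ)
    (hinter₁ : ∀ k ∈ M, lam k < mu k)
    (hinter₂ : ∀ k : ℤ, k ∈ M → k + 1 ∈ M → mu k < lam (k + 1))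
    (hacc : ∀ R : ℝ, 0 < R → {k ∈ M | |lam k| ≤ R}.Finite)
    (Δ : ℝ)
    (hsum : HasSum (fun k : M => mu (k : ℤ) - lam (k : ℤ)) Δ) :
    (∀ ζ : ℂ, ζ.im ≠ 0 →
        Multipliable (fun k : M => ((mu (k : ℤ) : ℂ) - ζ) / ((lam (k : ℤ) : ℂ) - ζ))) ∧
    ∀ ε : ℝ, 0 < ε →
      Tendsto (fun ζ : ℂ => ∏' k : M, ((mu (k : ℤ) : ℂ) - ζ) / ((lam (k : ℤ) : ℂ) - ζ))
        (Filter.comap (fun ζ : ℂ => ‖ζ‖) Filter.atTop ⊓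
          Filter.principal {ζ : ℂ | ε ≤ ζ.im})
        (𝓝 1) :=
  two_spectra_prod_tendsto_one_general M lam mu Δ hsum
end

section
/- Let M ⊆ ℤ be a nonempty integer interval and let (λ_k)_{k∈M}, (μ_k)_{k∈M} be interlaced real sequences with no finite accumulation point such that Σ_{k∈M}(μ_k − λ_k) = Δ < ∞. Then for every nonreal ζ the series Σ_{k∈M} Δ/(τ_k (λ_k − ζ)) converges absolutely and F(ζ) − 1 = Σ_{k∈M} Δ/(τ_k (λ_k − ζ)), where F(ζ) := ∏_{k∈M} (μ_k − ζ)/(λ_k − ζ). -/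
/-!
For a finite set `S` of indices, the partial-fraction expansion reads
`∏_{k∈S} (μ_k - ζ)/(λ_k - ζ) - 1 = ∑_{k∈S} c^S_k / (λ_k - ζ)` with
`c^S_k = (μ_k - λ_k) ∏_{j∈S, j≠k} (μ_j - λ_k)/(λ_j - λ_k)`, and comparing the terms of order `1/ζ`
at infinity gives `∑_{k∈S} c^S_k = ∑_{k∈S} (μ_k - λ_k) ≤ Δ`. Interlacing means that the intervals
`[λ_k, μ_k]` are pairwise disjoint, so every factor of `c^S_k` is positive: the `c^S_k` are
nonnegative weights of total mass at most `Δ`, and as `S` exhausts `M` they converge pointwise to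
`c_k = Δ / τ_k`. Pointwise convergence of weights of bounded mass is enough to pass to the limit
when they are tested against a function vanishing at infinity, here `k ↦ 1/(λ_k - ζ)`.
-/
open Filter Topology Function

section PartialFractions

variable {K ι : Type*} [Field K] [DecidableEq ι]

def partialFractionCoeff (a b : ι → K) (S : Finset ι) (k : ι) : K :=
  (b k - a k) * ∏ j ∈ S.erase k, (b j - a k) / (a j - a k)

variable {a b : ι → K} {S : Finset ι} {m : ι}

lemma partialFractionCoeff_insert_self (hm : m ∉ S) :
    partialFractionCoeff a b (insert m S) m = (b m - a m) * ∏ j ∈ S, (b j - a m) / (a j - a m) := by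
  rw [partialFractionCoeff, Finset.erase_insert hm]

lemma partialFractionCoeff_insert_of_mem (hm : m ∉ S) {k : ι} (hk : k ∈ S) :
    partialFractionCoeff a b (insert m S) k =
      (b m - a k) / (a m - a k) * partialFractionCoeff a b S k := by
  have hkm : k ≠ m := fun h => hm (h ▸ hk)
  rw [partialFractionCoeff, partialFractionCoeff, Finset.erase_insert_of_ne hkm.symm,
    Finset.prod_insert (by simp [hm])]
  ring

theorem prod_div_sub_sub_one_eq_sum (ha : Set.InjOn a S) {z : K} (hz : ∀ k ∈ S, a k ≠ z) :
    ∏ k ∈ S, (b k - z) / (a k - z) - 1 = ∑ k ∈ S, partialFractionCoeff a b S k / (a k - z) := by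
  induction S using Finset.induction_on generalizing z with
  | empty => simp
  | @insert m S hm ih =>
    have haS : Set.InjOn a S := ha.mono (by simp)
    have ham : ∀ k ∈ S, a k ≠ a m := fun k hk h =>
      hm (ha (by simp [hk]) (by simp) h ▸ hk)
    have hmz : a m - z ≠ 0 := sub_ne_zero.2 (hz m (by simp))
    set c := partialFractionCoeff a b S
    have key : ∀ k ∈ S, (b m - z) / (a m - z) * (c k / (a k - z)) =
        (b m - a m) * (c k / (a k - a m)) / (a m - z) +
          (b m - a k) / (a m - a k) * c k / (a k - z) := by
      intro k hk
      have h1 : a k - z ≠ 0 := sub_ne_zero.2 (hz k (by simp [hk]))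
      have h2 : a k - a m ≠ 0 := sub_ne_zero.2 (ham k hk)
      have h3 : a m - a k ≠ 0 := sub_ne_zero.2 (ham k hk).symm
      field_simp
      ring
    rw [Finset.prod_insert hm, Finset.sum_insert hm, partialFractionCoeff_insert_self hm,
      Finset.sum_congr rfl fun k hk => by rw [partialFractionCoeff_insert_of_mem hm hk],
      eq_add_of_sub_eq (ih haS fun k hk => hz k (by simp [hk])),
      eq_add_of_sub_eq (ih haS ham), mul_add, Finset.mul_sum, Finset.sum_congr rfl key,
      Finset.sum_add_distrib, ← Finset.sum_div, ← Finset.mul_sum]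
    field_simp
    ring

theorem sum_partialFractionCoeff (ha : Set.InjOn a S) :
    ∑ k ∈ S, partialFractionCoeff a b S k = ∑ k ∈ S, (b k - a k) := by
  induction S using Finset.induction_on with
  | empty => simp
  | @insert m S hm ih =>
    have haS : Set.InjOn a S := ha.mono (by simp)
    have ham : ∀ k ∈ S, a k ≠ a m := fun k hk h =>
      hm (ha (by simp [hk]) (by simp) h ▸ hk)
    set c := partialFractionCoeff a b S
    have key : ∀ k ∈ S,
        (b m - a k) / (a m - a k) * c k = c k - (b m - a m) * (c k / (a k - a m)) := by
      intro k hk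
      have h2 : a k - a m ≠ 0 := sub_ne_zero.2 (ham k hk)
      have h3 : a m - a k ≠ 0 := sub_ne_zero.2 (ham k hk).symm
      field_simp
      ring
    rw [Finset.sum_insert hm, Finset.sum_insert hm, partialFractionCoeff_insert_self hm,
      Finset.sum_congr rfl fun k hk => by rw [partialFractionCoeff_insert_of_mem hm hk],
      eq_add_of_sub_eq (prod_div_sub_sub_one_eq_sum haS ham), Finset.sum_congr rfl key,
      Finset.sum_sub_distrib, ← Finset.mul_sum, ih haS]
    ring

lemma map_partialFractionCoeff {L : Type*} [Field L] (f : K →+* L) (k : ι) :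
    f (partialFractionCoeff a b S k) = partialFractionCoeff (f <| a ·) (f <| b ·) S k := by
  simp [partialFractionCoeff, map_prod, map_div₀]

end PartialFractions

section WeightedSums

variable {β E : Type*} [NormedAddCommGroup E] [NormedSpace ℝ E]

lemma summable_norm_smul_of_tendsto_zero {v : β → ℝ} {h : β → E} (hv : Summable v)
    (hh : Tendsto h cofinite (𝓝 0)) : Summable fun k => ‖v k • h k‖ := by
  refine hv.norm.of_norm_bounded_eventually ?_
  filter_upwards [(tendsto_norm_zero.comp hh).eventually_le_const one_pos] with k hk
  rw [norm_norm, norm_smul]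
  exact mul_le_of_le_one_right (norm_nonneg _) hk

lemma norm_tsum_smul_sub_sum_le [CompleteSpace E] {v : β → ℝ} {h : β → E} {K : Finset β} {δ C : ℝ}
    (hv0 : ∀ k, 0 ≤ v k) (hv : Summable v) (hvC : ∑' k, v k ≤ C) (hδ : 0 ≤ δ)
    (hK : ∀ k ∉ K, ‖h k‖ ≤ δ) :
    ‖∑' k, v k • h k - ∑ k ∈ K, v k • h k‖ ≤ δ * C := by
  have hbound : ∀ k ∉ K, ‖v k • h k‖ ≤ v k * δ := fun k hk => by
    rw [norm_smul, Real.norm_of_nonneg (hv0 k)]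
    exact mul_le_mul_of_nonneg_left (hK k hk) (hv0 k)
  have hsum : Summable fun k => v k • h k :=
    (hv.mul_right δ).of_norm_bounded_eventually
      (K.finite_toSet.subset fun k hk => not_not.1 fun hkK => hk (hbound k hkK))
  rw [← hsum.sum_add_tsum_compl (s := K), add_sub_cancel_left]
  calc ‖∑' k : ↥(↑K : Set β)ᶜ, v k • h k‖ ≤ ∑' k : ↥(↑K : Set β)ᶜ, v k * δ :=
        tsum_of_norm_bounded ((hv.subtype _).mul_right δ).hasSum fun k => hbound k k.2
    _ ≤ (∑' k, v k) * δ := by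
        rw [tsum_mul_right]
        exact mul_le_mul_of_nonneg_right (hv.tsum_subtype_le v _ hv0) hδ
    _ ≤ δ * C := by rw [mul_comm]; exact mul_le_mul_of_nonneg_left hvC hδ

variable {w : Finset β → β → ℝ} {v : β → ℝ} {C : ℝ}

lemma summable_and_tsum_le_of_tendsto (hw0 : ∀ S k, 0 ≤ w S k) (hwC : ∀ S, ∑ k ∈ S, w S k ≤ C)
    (hlim : ∀ k, Tendsto (fun S => w S k) atTop (𝓝 (v k))) :
    Summable v ∧ ∑' k, v k ≤ C := by
  have hv0 : ∀ k, 0 ≤ v k := fun k => ge_of_tendsto' (hlim k) (hw0 · k)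
  have hvC : ∀ T : Finset β, ∑ k ∈ T, v k ≤ C := fun T => by
    refine le_of_tendsto (tendsto_finsetSum T fun k _ => hlim k) ?_
    filter_upwards [eventually_ge_atTop T] with S hTS
    exact (Finset.sum_le_sum_of_subset_of_nonneg hTS fun k _ _ => hw0 S k).trans (hwC S)
  have hv : Summable v := summable_of_sum_le hv0 hvC
  exact ⟨hv, hv.tsum_le_of_sum_le hvC⟩

theorem tendsto_sum_smul_of_tendsto [CompleteSpace E] (hw0 : ∀ S k, 0 ≤ w S k)
    (hwC : ∀ S, ∑ k ∈ S, w S k ≤ C)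
    (hlim : ∀ k, Tendsto (fun S => w S k) atTop (𝓝 (v k))) {h : β → E}
    (hh : Tendsto h cofinite (𝓝 0)) :
    Tendsto (fun S => ∑ k ∈ S, w S k • h k) atTop (𝓝 (∑' k, v k • h k)) := by
  classical
  obtain ⟨hv, hvC⟩ := summable_and_tsum_le_of_tendsto hw0 hwC hlim
  rw [Metric.tendsto_nhds]
  intro ε hε
  set δ := ε / (4 * (|C| + 1))
  have hδ : 0 < δ := by positivity
  have hδC : δ * C ≤ ε / 4 := by
    calc δ * C ≤ δ * (|C| + 1) := by gcongr; linarith [le_abs_self C]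
      _ = ε / 4 := by simp only [δ]; field_simp
  obtain ⟨K, hK⟩ : ∃ K : Finset β, ∀ k ∉ K, ‖h k‖ ≤ δ := by
    have := (tendsto_norm_zero.comp hh).eventually_le_const hδ
    exact ⟨this.toFinset, fun k hk => not_not.1 fun h' => hk (by simpa using h')⟩
  have hhead : Tendsto (fun S => ∑ k ∈ K, w S k • h k) atTop (𝓝 (∑ k ∈ K, v k • h k)) :=
    tendsto_finsetSum K fun k _ => (hlim k).smul_const (h k)
  filter_upwards [Metric.tendsto_nhds.1 hhead (ε / 2) (by positivity), eventually_ge_atTop K]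
    with S hS hKS
  have htailS : ‖∑ k ∈ S \ K, w S k • h k‖ ≤ δ * C := by
    calc ‖∑ k ∈ S \ K, w S k • h k‖ ≤ ∑ k ∈ S \ K, w S k * δ := by
          refine norm_sum_le_of_le _ fun k hk => ?_
          rw [norm_smul, Real.norm_of_nonneg (hw0 S k)]
          exact mul_le_mul_of_nonneg_left (hK k (Finset.mem_sdiff.1 hk).2) (hw0 S k)
      _ ≤ (∑ k ∈ S, w S k) * δ := by
          rw [← Finset.sum_mul]
          exact mul_le_mul_of_nonneg_right (Finset.sum_le_sum_of_subset_of_nonneg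
            Finset.sdiff_subset fun k _ _ => hw0 S k) hδ.le
      _ ≤ δ * C := by rw [mul_comm]; exact mul_le_mul_of_nonneg_left (hwC S) hδ.le
  have htail := norm_tsum_smul_sub_sum_le (fun k => ge_of_tendsto' (hlim k) (hw0 · k)) hv hvC
    hδ.le hK
  rw [dist_eq_norm] at hS ⊢
  rw [← Finset.sum_sdiff hKS]
  calc ‖∑ k ∈ S \ K, w S k • h k + ∑ k ∈ K, w S k • h k - ∑' k, v k • h k‖
      = ‖∑ k ∈ S \ K, w S k • h k + (∑ k ∈ K, w S k • h k - ∑ k ∈ K, v k • h k)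
          - (∑' k, v k • h k - ∑ k ∈ K, v k • h k)‖ := by congr 1; abel
    _ ≤ ‖∑ k ∈ S \ K, w S k • h k‖ + ‖∑ k ∈ K, w S k • h k - ∑ k ∈ K, v k • h k‖
          + ‖∑' k, v k • h k - ∑ k ∈ K, v k • h k‖ := norm_sub_le_of_le (norm_add_le _ _) le_rfl
    _ < ε := by linarith

end WeightedSums

section DisjointIntervals

variable {ι : Type*} {a b : ι → ℝ}

lemma tendsto_inv_sub_of_tendsto_norm {α F : Type*} [NormedField F] {l : Filter α} {f : α → F}
    (hf : Tendsto (‖f ·‖) l atTop) (z : F) : Tendsto (fun k => (f k - z)⁻¹) l (𝓝 0) := by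
  refine tendsto_inv₀_cobounded.comp (tendsto_norm_atTop_iff_cobounded.1 ?_)
  exact tendsto_atTop_mono (fun k => norm_sub_norm_le _ _)
    (tendsto_atTop_add_const_right _ _ hf)

lemma div_sub_pos_of_pairwise_disjoint (hab : ∀ k, a k < b k)
    (hdisj : Pairwise (Disjoint on fun k => Set.Icc (a k) (b k))) {j k : ι} (hjk : j ≠ k) :
    0 < (b j - a k) / (a j - a k) := by
  have hk : a k ∉ Set.Icc (a j) (b j) :=
    Set.disjoint_right.1 (hdisj hjk) (Set.left_mem_Icc.2 (hab k).le)
  rcases not_and_or.1 hk with hlt | hlt <;> rw [not_le] at hlt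
  · exact div_pos (by linarith [hab j]) (by linarith)
  · exact div_pos_of_neg_of_neg (by linarith) (by linarith [hab j])

lemma injective_of_pairwise_disjoint (hab : ∀ k, a k < b k)
    (hdisj : Pairwise (Disjoint on fun k => Set.Icc (a k) (b k))) : Function.Injective a := by
  intro j k hjk
  by_contra hne
  have := div_sub_pos_of_pairwise_disjoint hab hdisj hne
  rw [hjk, sub_self, div_zero] at this
  exact this.false

lemma partialFractionCoeff_nonneg [DecidableEq ι] (hab : ∀ k, a k < b k)
    (hdisj : Pairwise (Disjoint on fun k => Set.Icc (a k) (b k))) (S : Finset ι) (k : ι) :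
    0 ≤ partialFractionCoeff a b S k :=
  mul_nonneg (sub_nonneg.2 (hab k).le) <| Finset.prod_nonneg fun _ hj =>
    (div_sub_pos_of_pairwise_disjoint hab hdisj (Finset.ne_of_mem_erase hj)).le

/-- In the notation of the paper, `mittagLefflerCoeff λ μ k = Δ / τ_k`. -/
noncomputable def mittagLefflerCoeff (a b : ι → ℝ) (k : ι) : ℝ :=
  (b k - a k) * ∏' j : {j // j ≠ k}, (b j - a k) / (a j - a k)

lemma tendsto_partialFractionCoeff [DecidableEq ι] (hab : ∀ k, a k < b k)
    (hdisj : Pairwise (Disjoint on fun k => Set.Icc (a k) (b k)))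
    (hd : Summable fun k => b k - a k) (hacc : Tendsto (fun k => |a k|) cofinite atTop) (k : ι) :
    Tendsto (fun S => partialFractionCoeff a b S k) atTop (𝓝 (mittagLefflerCoeff a b k)) := by
  have hs : Summable fun j : {j // j ≠ k} => (b j - a j) * (a j - a k)⁻¹ :=
    (summable_norm_smul_of_tendsto_zero (hd.subtype _) <|
      (tendsto_inv_sub_of_tendsto_norm hacc (a k)).comp
        Subtype.val_injective.tendsto_cofinite).of_norm
  have hmul : Multipliable fun j : {j // j ≠ k} => (b j - a k) / (a j - a k) := by
    refine (Real.multipliable_one_add_of_summable hs).congr fun j => ?_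
    have : a j - a k ≠ 0 := sub_ne_zero.2 ((injective_of_pairwise_disjoint hab hdisj).ne j.2)
    field_simp
    ring
  have := (hasProd_subtype_iff_mulIndicator (f := fun j => (b j - a k) / (a j - a k))
    (s := {j | j ≠ k})).1 hmul.hasProd
  refine (this.const_mul (b k - a k)).congr fun S => ?_
  simp only [Set.mulIndicator_apply, Set.mem_ofPred_eq, Finset.prod_ite, Finset.prod_const_one,
    mul_one, Finset.filter_ne', partialFractionCoeff]

lemma sum_partialFractionCoeff_le_tsum [DecidableEq ι] (hab : ∀ k, a k < b k)
    (hdisj : Pairwise (Disjoint on fun k => Set.Icc (a k) (b k)))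
    (hd : Summable fun k => b k - a k) (S : Finset ι) :
    ∑ k ∈ S, partialFractionCoeff a b S k ≤ ∑' k, (b k - a k) := by
  rw [sum_partialFractionCoeff (injective_of_pairwise_disjoint hab hdisj).injOn]
  exact hd.sum_le_tsum S fun k _ => (sub_pos.2 (hab k)).le

lemma summable_mittagLefflerCoeff (hab : ∀ k, a k < b k)
    (hdisj : Pairwise (Disjoint on fun k => Set.Icc (a k) (b k)))
    (hd : Summable fun k => b k - a k) (hacc : Tendsto (fun k => |a k|) cofinite atTop) :
    Summable (mittagLefflerCoeff a b) := by
  classical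
  exact (summable_and_tsum_le_of_tendsto (partialFractionCoeff_nonneg hab hdisj)
    (sum_partialFractionCoeff_le_tsum hab hdisj hd)
    (tendsto_partialFractionCoeff hab hdisj hd hacc)).1

theorem hasProd_div_sub_of_pairwise_disjoint (hab : ∀ k, a k < b k)
    (hdisj : Pairwise (Disjoint on fun k => Set.Icc (a k) (b k)))
    (hd : Summable fun k => b k - a k) (hacc : Tendsto (fun k => |a k|) cofinite atTop)
    {ζ : ℂ} (hζ : ζ.im ≠ 0) :
    HasProd (fun k => ((b k : ℂ) - ζ) / ((a k : ℂ) - ζ))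
      (1 + ∑' k, mittagLefflerCoeff a b k • ((a k : ℂ) - ζ)⁻¹) := by
  classical
  have hζa : ∀ k, (a k : ℂ) ≠ ζ := fun k h => hζ (by rw [← h, Complex.ofReal_im])
  have hacc' : Tendsto (fun k => ‖(a k : ℂ)‖) cofinite atTop := by simpa using hacc
  have hlim := tendsto_sum_smul_of_tendsto (partialFractionCoeff_nonneg hab hdisj)
    (sum_partialFractionCoeff_le_tsum hab hdisj hd)
    (tendsto_partialFractionCoeff hab hdisj hd hacc)
    (tendsto_inv_sub_of_tendsto_norm hacc' ζ)
  refine (hlim.const_add 1).congr fun S => ?_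
  have hS := prod_div_sub_sub_one_eq_sum (a := fun k => (a k : ℂ)) (b := fun k => (b k : ℂ))
    (Complex.ofReal_injective.comp (injective_of_pairwise_disjoint hab hdisj)).injOn
    fun k (_ : k ∈ S) => hζa k
  rw [sub_eq_iff_eq_add'.1 hS]
  congr 1
  refine Finset.sum_congr rfl fun k _ => ?_
  rw [Complex.real_smul, ← div_eq_mul_inv, ← Complex.ofRealHom_eq_coe, map_partialFractionCoeff]
  rfl

end DisjointIntervals

section IntegerInterval

variable {M : Set ℤ} {lam mu : ℤ → ℝ}

lemma mu_lt_lam_of_lt (hMint : ∀ a b c : ℤ, a ∈ M → c ∈ M → a ≤ b → b ≤ c → b ∈ M)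
    (hinter₁ : ∀ k ∈ M, lam k < mu k) (hinter₂ : ∀ k : ℤ, k ∈ M → k + 1 ∈ M → mu k < lam (k + 1))
    {j k : ℤ} (hj : j ∈ M) (hk : k ∈ M) (hjk : j < k) : mu j < lam k := by
  induction k, (show j + 1 ≤ k by omega) using Int.leInduction with
  | base => exact hinter₂ j hj hk
  | succ n hn ih =>
    have hn' : n ∈ M := hMint j n (n + 1) hj hk (by omega) (by omega)
    exact (ih hn' (by omega)).trans ((hinter₁ n hn').trans (hinter₂ n hn' hk))

lemma pairwise_disjoint_Icc_of_interlaced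
    (hMint : ∀ a b c : ℤ, a ∈ M → c ∈ M → a ≤ b → b ≤ c → b ∈ M)
    (hinter₁ : ∀ k ∈ M, lam k < mu k) (hinter₂ : ∀ k : ℤ, k ∈ M → k + 1 ∈ M → mu k < lam (k + 1)) :
    Pairwise (Disjoint on fun k : M => Set.Icc (lam k) (mu k)) := by
  refine (pairwise_disjoint_on _).2 fun j k hjk => Set.disjoint_left.2 fun x hxj hxk => ?_
  exact (hxj.2.trans_lt (mu_lt_lam_of_lt hMint hinter₁ hinter₂ j.2 k.2 hjk)).not_ge hxk.1

lemma tendsto_abs_cofinite_atTop (hacc : ∀ R : ℝ, 0 < R → {k ∈ M | |lam k| ≤ R}.Finite) :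
    Tendsto (fun k : M => |lam k|) cofinite atTop := by
  refine tendsto_atTop.2 fun R => eventually_cofinite.2 ?_
  refine ((hacc (max R 1) (by positivity)).preimage Subtype.val_injective.injOn).subset ?_
  intro k hk
  exact ⟨k.2, (not_le.1 hk).le.trans (le_max_left R 1)⟩

end IntegerInterval

theorem two_spectra_mittag_leffler_general
    (M : Set ℤ)
    (hMint : ∀ a b c : ℤ, a ∈ M → c ∈ M → a ≤ b → b ≤ c → b ∈ M)
    (lam mu : ℤ → ℝ)
    (hinter₁ : ∀ k ∈ M, lam k < mu k)
    (hinter₂ : ∀ k : ℤ, k ∈ M → k + 1 ∈ M → mu k < lam (k + 1))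
    (hacc : ∀ R : ℝ, 0 < R → {k ∈ M | |lam k| ≤ R}.Finite)
    (Δ : ℝ)
    (hsum : HasSum (fun k : M => mu (k : ℤ) - lam (k : ℤ)) Δ)
    (τ : ℤ → ℝ)
    (hτ : ∀ n ∈ M,
      (τ n)⁻¹ = (mu n - lam n) / Δ *
        ∏' k : {k : M // (k : ℤ) ≠ n},
          (mu ((k : M) : ℤ) - lam n) / (lam ((k : M) : ℤ) - lam n)) :
    ∀ ζ : ℂ, ζ.im ≠ 0 →
      Summable (fun k : M => ‖(Δ : ℂ) / ((τ (k : ℤ) : ℂ) * ((lam (k : ℤ) : ℂ) - ζ))‖) ∧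
      (∏' k : M, ((mu (k : ℤ) : ℂ) - ζ) / ((lam (k : ℤ) : ℂ) - ζ)) - 1 =
        ∑' k : M, (Δ : ℂ) / ((τ (k : ℤ) : ℂ) * ((lam (k : ℤ) : ℂ) - ζ)) := by
  intro ζ hζ
  have hab : ∀ k : M, lam k < mu k := fun k => hinter₁ k k.2
  have hdisj := pairwise_disjoint_Icc_of_interlaced hMint hinter₁ hinter₂
  have hacc' := tendsto_abs_cofinite_atTop hacc
  have hcoeff : ∀ k : M,
      Δ * (τ k)⁻¹ = mittagLefflerCoeff (fun k : M => lam k) (fun k => mu k) k := by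
    intro k
    have hΔ : Δ ≠ 0 :=
      ((sub_pos.2 (hab k)).trans_le (le_hasSum hsum k fun j _ => (sub_pos.2 (hab j)).le)).ne'
    have hne : (fun j : M => (j : ℤ) ≠ k) = (· ≠ k) := funext fun j => propext Subtype.coe_ne_coe
    rw [hτ k k.2, hne, mittagLefflerCoeff]
    field_simp
  have hterm : ∀ k : M, (Δ : ℂ) / ((τ k : ℂ) * ((lam k : ℂ) - ζ)) =
      mittagLefflerCoeff (fun k : M => lam k) (fun k => mu k) k • ((lam k : ℂ) - ζ)⁻¹ := by
    intro k
    rw [Complex.real_smul, ← hcoeff, div_mul_eq_div_div, div_eq_mul_inv, div_eq_mul_inv]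
    push_cast
    ring
  simp only [hterm]
  refine ⟨summable_norm_smul_of_tendsto_zero (summable_mittagLefflerCoeff hab hdisj
    hsum.summable hacc') (tendsto_inv_sub_of_tendsto_norm (by simpa using hacc') ζ), ?_⟩
  rw [(hasProd_div_sub_of_pairwise_disjoint hab hdisj hsum.summable hacc' hζ).tprod_eq,
    add_sub_cancel_left]

/-- With F(ζ) = ∏_{k∈M} (μ_k − ζ)/(λ_k − ζ) and τ_n as before, for every
nonreal ζ the series Σ_{k∈M} Δ/(τ_k (λ_k − ζ)) converges absolutely and
F(ζ) − 1 = Σ_{k∈M} Δ/(τ_k (λ_k − ζ)). -/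
theorem two_spectra_mittag_leffler
    (M : Set ℤ) (hM : M.Nonempty)
    (hMint : ∀ a b c : ℤ, a ∈ M → c ∈ M → a ≤ b → b ≤ c → b ∈ M)
    (lam mu : ℤ → ℝ)
    (hinter₁ : ∀ k ∈ M, lam k < mu k)
    (hinter₂ : ∀ k : ℤ, k ∈ M → k + 1 ∈ M → mu k < lam (k + 1))
    (hacc : ∀ R : ℝ, 0 < R → {k ∈ M | |lam k| ≤ R}.Finite)
    (Δ : ℝ)
    (hsum : HasSum (fun k : M => mu (k : ℤ) - lam (k : ℤ)) Δ)
    (τ : ℤ → ℝ)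
    (hτ : ∀ n ∈ M,
      (τ n)⁻¹ = (mu n - lam n) / Δ *
        ∏' k : {k : M // (k : ℤ) ≠ n},
          (mu ((k : M) : ℤ) - lam n) / (lam ((k : M) : ℤ) - lam n)) :
    ∀ ζ : ℂ, ζ.im ≠ 0 →
      Summable (fun k : M => ‖(Δ : ℂ) / ((τ (k : ℤ) : ℂ) * ((lam (k : ℤ) : ℂ) - ζ))‖) ∧
      (∏' k : M, ((mu (k : ℤ) : ℂ) - ζ) / ((lam (k : ℤ) : ℂ) - ζ)) - 1 =
        ∑' k : M, (Δ : ℂ) / ((τ (k : ℤ) : ℂ) * ((lam (k : ℤ) : ℂ) - ζ)) :=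
  two_spectra_mittag_leffler_general M hMint lam mu hinter₁ hinter₂ hacc Δ hsum τ hτ
end

section
/- Let H be a complex Hilbert space, A : H → H a bounded linear operator, e ∈ H, and h₁, h₂ ∈ ℂ. For j = 1, 2 set A_{h_j} := A − h_j·⟨·, e⟩e, and let ζ ∈ ℂ be such that A_{h₁} − ζI and A_{h₂} − ζI are boundedly invertible; set m_{h_j} := ⟨(A_{h_j} − ζI)^{-1} e, e⟩. If m_{h₁} ≠ 0, then m_{h₂}/m_{h₁} = 1 + (h₂ − h₁)·m_{h₂}. -/
open scoped InnerProductSpace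

/-- For rank-one perturbations A_{h_j} = A − h_j⟨·,e⟩e (j = 1,2) and a
point ζ where both A_{h₁} − ζI and A_{h₂} − ζI are boundedly invertible, setting
m_{h_j} = ⟨(A_{h_j} − ζI)⁻¹e, e⟩ (inner products linear in the first slot, i.e.
⟨x,e⟩ = ⟪e,x⟫ in Mathlib's convention), if m_{h₁} ≠ 0 then
m_{h₂}/m_{h₁} = 1 + (h₂ − h₁)·m_{h₂}. -/
theorem rank_one_m_function_ratio
    {H : Type*} [NormedAddCommGroup H] [InnerProductSpace ℂ H] [CompleteSpace H]
    (A : H →L[ℂ] H) (e : H) (h₁ h₂ : ℂ) (ζ : ℂ)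
    (A₁ A₂ : H →L[ℂ] H)
    (hA₁ : A₁ = A - h₁ • ((innerSL ℂ e).smulRight e))
    (hA₂ : A₂ = A - h₂ • ((innerSL ℂ e).smulRight e))
    (hU₁ : IsUnit (A₁ - ζ • (1 : H →L[ℂ] H)))
    (hU₂ : IsUnit (A₂ - ζ • (1 : H →L[ℂ] H)))
    (m₁ m₂ : ℂ)
    (hm₁ : m₁ = ⟪e, Ring.inverse (A₁ - ζ • (1 : H →L[ℂ] H)) e⟫_ℂ)
    (hm₂ : m₂ = ⟪e, Ring.inverse (A₂ - ζ • (1 : H →L[ℂ] H)) e⟫_ℂ)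
    (hne : m₁ ≠ 0) :
    m₂ / m₁ = 1 + (h₂ - h₁) * m₂ := by
  set P : H →L[ℂ] H := (innerSL ℂ e).smulRight e with hP
  set T₁ : H →L[ℂ] H := A₁ - ζ • (1 : H →L[ℂ] H) with hT₁
  set T₂ : H →L[ℂ] H := A₂ - ζ • (1 : H →L[ℂ] H) with hT₂
  set R₁ : H →L[ℂ] H := Ring.inverse T₁ with hR₁
  set R₂ : H →L[ℂ] H := Ring.inverse T₂ with hR₂
  have hT : T₁ - T₂ = (h₂ - h₁) • P := by
    rw [hT₁, hT₂, hA₁, hA₂]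
    module
  have h1 : T₁ * R₁ = 1 := Ring.mul_inverse_cancel _ hU₁
  have h2 : R₂ * T₂ = 1 := Ring.inverse_mul_cancel _ hU₂
  have key : R₂ - R₁ = (h₂ - h₁) • (R₂ * P * R₁) := by
    have : R₂ * (T₁ - T₂) * R₁ = R₂ - R₁ := by
      rw [mul_sub, sub_mul, mul_assoc R₂ T₁ R₁, h1, mul_one, h2, one_mul]
    rw [← this, hT]
    simp [smul_mul_assoc, mul_smul_comm]
  have hPe : P (R₁ e) = m₁ • e := by
    simp [hP, hm₁]
  have keye : R₂ e - R₁ e = (h₂ - h₁) • (m₁ • R₂ e) := by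
    have := congrArg (fun (T : H →L[ℂ] H) => T e) key
    simpa [ContinuousLinearMap.sub_apply, ContinuousLinearMap.smul_apply,
      ContinuousLinearMap.mul_apply, hPe] using this
  have hmain : m₂ - m₁ = (h₂ - h₁) * (m₁ * m₂) := by
    have := congrArg (fun x => ⟪e, x⟫_ℂ) keye
    simpa [inner_sub_right, inner_smul_right, ← hm₁, ← hm₂, mul_assoc] using this
  field_simp
  linear_combination hmain
end

section
/- Let T be a bounded self-adjoint operator on the Hilbert space ℓ²(ℕ, ℂ) with canonical orthonormal basis (e_n)_{n∈ℕ} (indexed from 1), and suppose T e₁ = q₁ e₁ + b₁ e₂ with q₁ ∈ ℝ and b₁ > 0. Let V := {e₁}^⊥ be the orthogonal complement of the span of e₁, P_V the orthogonal projection onto V, and T' : V → V the compression T' x := P_V(T x) for x ∈ V. Then for every ζ ∈ ℂ with Im ζ ≠ 0: T − ζI is boundedly invertible on ℓ², T' − ζI is boundedly invertible on V, m(ζ) := ⟨(T − ζI)^{-1} e₁, e₁⟩ ≠ 0, and ⟨(T' − ζI)^{-1} e₂, e₂⟩ = −(1/b₁²)·((ζ − q₁) + 1/m(ζ)). -/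
/-! Write `u = (T - ζ)⁻¹ e₁ = m e₁ + w` with `m = ⟪e₁, u⟫` and `w ∈ V`. Projecting
`(T - ζ) u = e₁` onto `V` and using `T e₁ = q₁ e₁ + b₁ e₂` gives `(T' - ζ) w = -m b₁ e₂`, so
`w = -m b₁ (T' - ζ)⁻¹ e₂`. Pairing `(T - ζ) u = e₁` with `e₁` and moving `T` across by
self-adjointness then yields `1 = m (q₁ - ζ - b₁² ⟪e₂, (T' - ζ)⁻¹ e₂⟫)`. Invertibility holds
because the compression `T'` is again self-adjoint, and `m ≠ 0` because
`m = ⟪(T - ζ) u, u⟫` has imaginary part `Im ζ ‖u‖²`. -/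

open scoped InnerProductSpace

section
variable {R M : Type*} [Semiring R] [TopologicalSpace M] [AddCommMonoid M] [Module R M]
  [ContinuousAdd M]

theorem ContinuousLinearMap.apply_ring_inverse_apply {A : M →L[R] M} (hA : IsUnit A) (x : M) :
    A (Ring.inverse A x) = x := by
  simpa using DFunLike.congr_fun (Ring.mul_inverse_cancel A hA) x

theorem ContinuousLinearMap.ring_inverse_apply_apply {A : M →L[R] M} (hA : IsUnit A) (x : M) :
    Ring.inverse A (A x) = x := by
  simpa using DFunLike.congr_fun (Ring.inverse_mul_cancel A hA) x
end

section
variable {𝕜 E : Type*} [RCLike 𝕜] [NormedAddCommGroup E] [InnerProductSpace 𝕜 E]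

theorem eq_inner_smul_add_orthogonalProjectionOnto {x : E} (hx : ‖x‖ = 1) (u : E) :
    u = ⟪x, u⟫_𝕜 • x + ((𝕜 ∙ x)ᗮ.orthogonalProjectionOnto u : E) := by
  rw [← Submodule.starProjection_unit_singleton 𝕜 hx, ← Submodule.starProjection_apply,
    Submodule.starProjection_add_starProjection_orthogonal]

theorem IsSelfAdjoint.compression [CompleteSpace E] {K : Submodule 𝕜 E}
    [K.HasOrthogonalProjection] [CompleteSpace K] {T : E →L[𝕜] E} (hT : IsSelfAdjoint T) {T' : K →L[𝕜] K}
    (hT' : ∀ w, T' w = K.orthogonalProjectionOnto (T w)) : IsSelfAdjoint T' := by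
  refine ContinuousLinearMap.isSelfAdjoint_iff_isSymmetric.mpr fun v w ↦ ?_
  simp only [ContinuousLinearMap.coe_coe, hT',
    Submodule.inner_orthogonalProjectionOnto_eq_of_mem_right,
    Submodule.inner_orthogonalProjectionOnto_eq_of_mem_left]
  exact hT.isSymmetric v w
end

section
variable {E : Type*} [NormedAddCommGroup E] [InnerProductSpace ℂ E]

theorem IsSelfAdjoint.isUnit_sub_smul_one [CompleteSpace E] {A : E →L[ℂ] E}
    (hA : IsSelfAdjoint A) {ζ : ℂ} (hζ : ζ.im ≠ 0) : IsUnit (A - ζ • (1 : E →L[ℂ] E)) := by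
  have h : ζ ∉ spectrum ℂ A := fun h ↦ hζ (hA.im_eq_zero_of_mem_spectrum h)
  rw [spectrum.notMem_iff, ← neg_sub, IsUnit.neg_iff, Algebra.algebraMap_eq_smul_one] at h
  exact h

theorem LinearMap.IsSymmetric.inner_ring_inverse_sub_smul_one_ne_zero {A : E →L[ℂ] E}
    (hA : (A : E →ₗ[ℂ] E).IsSymmetric) {ζ : ℂ} (hζ : ζ.im ≠ 0)
    (hunit : IsUnit (A - ζ • (1 : E →L[ℂ] E))) {x : E} (hx : x ≠ 0) :
    ⟪x, Ring.inverse (A - ζ • (1 : E →L[ℂ] E)) x⟫_ℂ ≠ 0 := by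
  set u := Ring.inverse (A - ζ • (1 : E →L[ℂ] E)) x
  have hxu : A u - ζ • u = x := by
    simpa using ContinuousLinearMap.apply_ring_inverse_apply hunit x
  have hu : u ≠ 0 := by rintro hu; simp [hu, eq_comm, hx] at hxu
  have him : (⟪x, u⟫_ℂ).im = ζ.im * ‖u‖ ^ 2 := by
    rw [← hxu, inner_sub_left, inner_smul_left, inner_self_eq_norm_sq_to_K]
    have hreal : (⟪A u, u⟫_ℂ).im = 0 := hA.im_inner_apply_self u
    simp [hreal, ← Complex.ofReal_pow]
  intro h
  rw [h, Complex.zero_im, eq_comm, mul_eq_zero] at him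
  exact him.elim hζ (by simpa using hu)

variable {T : E →L[ℂ] E} {x : E} {T' : (ℂ ∙ x)ᗮ →L[ℂ] (ℂ ∙ x)ᗮ}
  (hT' : ∀ w, T' w = (ℂ ∙ x)ᗮ.orthogonalProjectionOnto (T w)) {v : (ℂ ∙ x)ᗮ}
  {ζ : ℂ} (hA : IsUnit (T - ζ • (1 : E →L[ℂ] E)))
  (hA' : IsUnit (T' - ζ • (1 : (ℂ ∙ x)ᗮ →L[ℂ] (ℂ ∙ x)ᗮ))) (hx : ‖x‖ = 1)
include hT' hA hA' hx

theorem orthogonalProjectionOnto_ring_inverse_sub_smul_one_apply {q b : ℂ}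
    (hTx : T x = q • x + b • (v : E)) :
    (ℂ ∙ x)ᗮ.orthogonalProjectionOnto (Ring.inverse (T - ζ • (1 : E →L[ℂ] E)) x) =
      -(⟪x, Ring.inverse (T - ζ • (1 : E →L[ℂ] E)) x⟫_ℂ * b) •
        Ring.inverse (T' - ζ • (1 : (ℂ ∙ x)ᗮ →L[ℂ] (ℂ ∙ x)ᗮ)) v := by
  set P := (ℂ ∙ x)ᗮ.orthogonalProjectionOnto
  set u := Ring.inverse (T - ζ • (1 : E →L[ℂ] E)) x
  set m := ⟪x, u⟫_ℂ
  have hAu : T u - ζ • u = x := by simpa using ContinuousLinearMap.apply_ring_inverse_apply hA x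
  have hPx : P x = 0 := Submodule.orthogonalProjectionOnto_orthogonal_apply_eq_zero
    (Submodule.mem_span_singleton_self x)
  have hPv : P v = v := Submodule.orthogonalProjectionOnto_mem_subspace_eq_self v
  have hA'Pu : T' (P u) - ζ • P u = -(m * b) • v := by
    have hPTu : P (T u) = (m * b) • v + T' (P u) := by
      conv_lhs => rw [eq_inner_smul_add_orthogonalProjectionOnto (𝕜 := ℂ) hx u]
      simp only [map_add, map_smul, hTx, hPx, hPv, hT', smul_zero, zero_add, smul_smul]
      rfl
    have h := congrArg P hAu
    rw [map_sub, map_smul, hPTu, hPx] at h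
    rw [neg_smul, eq_neg_iff_add_eq_zero, ← h]
    abel
  have h := ContinuousLinearMap.ring_inverse_apply_apply hA' (P u)
  simp only [sub_apply, smul_apply, one_apply_eq_self, hA'Pu, map_smul] at h
  exact h.symm

theorem inner_ring_inverse_sub_smul_one_mul_eq_one (hT : (T : E →ₗ[ℂ] E).IsSymmetric)
    {q b : ℝ} (hTx : T x = (q : ℂ) • x + (b : ℂ) • (v : E)) :
    ⟪x, Ring.inverse (T - ζ • (1 : E →L[ℂ] E)) x⟫_ℂ *
      (q - ζ - b ^ 2 * ⟪v, Ring.inverse (T' - ζ • (1 : (ℂ ∙ x)ᗮ →L[ℂ] (ℂ ∙ x)ᗮ)) v⟫_ℂ) = 1 := by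
  set u := Ring.inverse (T - ζ • (1 : E →L[ℂ] E)) x
  have hAu : T u - ζ • u = x := by simpa using ContinuousLinearMap.apply_ring_inverse_apply hA x
  have hvu : ⟪(v : E), u⟫_ℂ = -(⟪x, u⟫_ℂ * b) *
      ⟪v, Ring.inverse (T' - ζ • (1 : (ℂ ∙ x)ᗮ →L[ℂ] (ℂ ∙ x)ᗮ)) v⟫_ℂ := by
    rw [← inner_smul_right,
      ← orthogonalProjectionOnto_ring_inverse_sub_smul_one_apply hT' hA hA' hx hTx,
      Submodule.inner_orthogonalProjectionOnto_eq_of_mem_left]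
  calc _ = ⟪x, T u - ζ • u⟫_ℂ := by
        have hsymm : ⟪x, T u⟫_ℂ = ⟪T x, u⟫_ℂ := (hT x u).symm
        rw [inner_sub_right, inner_smul_right, hsymm, hTx]
        simp only [inner_add_left, inner_smul_left, Complex.conj_ofReal, hvu]
        ring
    _ = 1 := by rw [hAu, inner_self_eq_norm_sq_to_K, hx]; simp
end

/-- Let T be bounded self-adjoint on ℓ²(ℕ,ℂ) with canonical basis
(e n)_{n∈ℕ} (so e 0, e 1 play the roles of e₁, e₂), T e₁ = q₁e₁ + b₁e₂ with q₁ real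
and b₁ > 0. Let V = {e₁}ᗮ and T' the compression of T to V. Then for nonreal ζ:
T − ζI and T' − ζI are boundedly invertible, m(ζ) = ⟨(T − ζI)⁻¹e₁, e₁⟩ ≠ 0, and
⟨(T' − ζI)⁻¹e₂, e₂⟩ = −(1/b₁²)((ζ − q₁) + 1/m(ζ)) (inner products linear in the
first slot, i.e. ⟨x,y⟩ = ⟪y,x⟫ in Mathlib's convention). -/
theorem ricatti_equation_for_truncated_jacobi
    (T : lp (fun _ : ℕ => ℂ) 2 →L[ℂ] lp (fun _ : ℕ => ℂ) 2)
    (hT : IsSelfAdjoint T)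
    (e : ℕ → lp (fun _ : ℕ => ℂ) 2)
    (he : ∀ n, e n = lp.single 2 n 1)
    (q₁ b₁ : ℝ) (hb₁ : 0 < b₁)
    (hTe : T (e 0) = (q₁ : ℂ) • e 0 + (b₁ : ℂ) • e 1)
    (T' : ↥((Submodule.span ℂ {e 0})ᗮ) →L[ℂ] ↥((Submodule.span ℂ {e 0})ᗮ))
    (hT' : ∀ x : ↥((Submodule.span ℂ {e 0})ᗮ),
        T' x = Submodule.orthogonalProjectionOnto ((Submodule.span ℂ {e 0})ᗮ) (T x)) :
    ∀ ζ : ℂ, ζ.im ≠ 0 →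
      IsUnit (T - ζ • (1 : lp (fun _ : ℕ => ℂ) 2 →L[ℂ] lp (fun _ : ℕ => ℂ) 2)) ∧
      IsUnit (T' - ζ • (1 : ↥((Submodule.span ℂ {e 0})ᗮ) →L[ℂ] ↥((Submodule.span ℂ {e 0})ᗮ))) ∧
      ⟪e 0, Ring.inverse
          (T - ζ • (1 : lp (fun _ : ℕ => ℂ) 2 →L[ℂ] lp (fun _ : ℕ => ℂ) 2)) (e 0)⟫_ℂ ≠ 0 ∧
      ∀ v : ↥((Submodule.span ℂ {e 0})ᗮ), (v : lp (fun _ : ℕ => ℂ) 2) = e 1 →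
        ⟪v, Ring.inverse
            (T' - ζ • (1 : ↥((Submodule.span ℂ {e 0})ᗮ) →L[ℂ] ↥((Submodule.span ℂ {e 0})ᗮ))) v⟫_ℂ =
          -(1 / (b₁ : ℂ) ^ 2) *
            ((ζ - (q₁ : ℂ)) +
              1 / ⟪e 0, Ring.inverse
                  (T - ζ • (1 : lp (fun _ : ℕ => ℂ) 2 →L[ℂ] lp (fun _ : ℕ => ℂ) 2)) (e 0)⟫_ℂ) := by
  intro ζ hζ
  have hnorm : ‖e 0‖ = 1 := by rw [he, lp.norm_single (by norm_num)]; simp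
  have hA := hT.isUnit_sub_smul_one hζ
  have hA' := (hT.compression hT').isUnit_sub_smul_one hζ
  have he₀ : e 0 ≠ 0 := norm_ne_zero_iff.mp (by simp [hnorm])
  have hm := hT.isSymmetric.inner_ring_inverse_sub_smul_one_ne_zero hζ hA he₀
  refine ⟨hA, hA', hm, fun v hv ↦ ?_⟩
  have hriccati := inner_ring_inverse_sub_smul_one_mul_eq_one hT' hA hA' hnorm hT.isSymmetric
    (hv ▸ hTe)
  have hb : (b₁ : ℂ) ≠ 0 := by exact_mod_cast hb₁.ne'
  field_simp
  linear_combination -hriccati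
end
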